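/- Let K be a complete discrete valuation field of characteristic p>0 with perfect residue field k, and let L/K be a ramified Artin–Schreier extension defined by x^p−x=a with a∈K∖P(K). Let m_a>0 be the smallest integer such that the image of a lies in F_{m_a}H^1(K). Then the valuation of the different of L/K equals (m_a+1)(p−1). -/

import Mathlib

/-- A normalized (additive) discrete valuation on a field `K`; the value `v 0` is junk.
Together with `IsComplete` and `ResiduePerfect` below, this models a complete discrete
valuation field with perfect residue field. -/
structure DVal (K : Type*) [Field K] where
  v : K → ℤ
  v_mul : ∀ {x y : K}, x ≠ 0 → y ≠ 0 → v (x * y) = v x + v y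
  v_add : ∀ {x y : K}, x ≠ 0 → y ≠ 0 → x + y ≠ 0 → min (v x) (v y) ≤ v (x + y)
  exists_uniformizer : ∃ t : K, t ≠ 0 ∧ v t = 1

namespace DVal

variable {K : Type*} [Field K] (V : DVal K)

/-- `x` lies in the valuation ring `𝒪_K`. -/
def integer (x : K) : Prop := x = 0 ∨ 0 ≤ V.v x

/-- `x` lies in the maximal ideal `𝔪_K`. -/
def maxIdeal (x : K) : Prop := x = 0 ∨ 1 ≤ V.v x

/-- `t` is a uniformizer. -/
def IsUniformizer (t : K) : Prop := t ≠ 0 ∧ V.v t = 1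

/-- `x ∈ F_nK = 𝔪_K^{-n}`, i.e. `v(x) ≥ -n` (or `x = 0`). -/
def Fil (n : ℤ) (x : K) : Prop := x = 0 ∨ -n ≤ V.v x

/-- `f` is a Cauchy sequence for `V`. -/
def IsCauchy (f : ℕ → K) : Prop :=
  ∀ N : ℤ, ∃ M : ℕ, ∀ m k : ℕ, M ≤ m → M ≤ k → f m = f k ∨ N ≤ V.v (f m - f k)

/-- `f` converges to `x` for `V`. -/
def Tendsto (f : ℕ → K) (x : K) : Prop :=
  ∀ N : ℤ, ∃ M : ℕ, ∀ m : ℕ, M ≤ m → f m = x ∨ N ≤ V.v (f m - x)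

/-- `K` is complete for `V`. -/
def IsComplete : Prop := ∀ f : ℕ → K, V.IsCauchy f → ∃ x : K, V.Tendsto f x

/-- The residue field `k = 𝒪_K/𝔪_K` is perfect (in characteristic `p`): the Frobenius
is surjective on the residue field. -/
def ResiduePerfect (p : ℕ) : Prop :=
  ∀ x : K, V.integer x → ∃ y : K, V.integer y ∧ V.maxIdeal (x - y ^ p)

end DVal

namespace DVal

variable {K : Type*} [Field K] (V : DVal K)

lemma v_one : V.v 1 = 0 := by
  have h := V.v_mul (one_ne_zero (α := K)) one_ne_zero
  rw [one_mul] at h; omega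

lemma v_neg {x : K} (hx : x ≠ 0) : V.v (-x) = V.v x := by
  have h1 : V.v ((-1 : K) * (-1)) = V.v (-1) + V.v (-1) :=
    V.v_mul (by norm_num) (by norm_num)
  rw [show ((-1 : K) * (-1)) = 1 by ring, V.v_one] at h1
  have h2 : V.v ((-1 : K) * x) = V.v (-1) + V.v x := V.v_mul (by norm_num) hx
  rw [show ((-1 : K) * x) = -x by ring] at h2
  omega

lemma v_pow {x : K} (hx : x ≠ 0) (n : ℕ) : V.v (x ^ n) = n * V.v x := by
  induction n with
  | zero => simpa using V.v_one
  | succ n ih =>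
    rw [pow_succ, V.v_mul (pow_ne_zero _ hx) hx, ih]; push_cast; ring

lemma v_inv {x : K} (hx : x ≠ 0) : V.v x⁻¹ = -V.v x := by
  have h := V.v_mul hx (inv_ne_zero hx)
  rw [mul_inv_cancel₀ hx, V.v_one] at h; omega

lemma v_zpow {x : K} (hx : x ≠ 0) (n : ℤ) : V.v (x ^ n) = n * V.v x := by
  induction n using Int.induction_on with
  | zero => simpa using V.v_one
  | succ n ih =>
    rw [zpow_add_one₀ hx, V.v_mul (zpow_ne_zero _ hx) hx, ih]; ring
  | pred n ih =>
    rw [zpow_sub_one₀ hx, V.v_mul (zpow_ne_zero _ hx) (inv_ne_zero hx), ih, V.v_inv hx]; ring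

lemma exists_v (n : ℤ) : ∃ c : K, c ≠ 0 ∧ V.v c = n := by
  obtain ⟨t, ht, hv⟩ := V.exists_uniformizer
  exact ⟨t ^ n, zpow_ne_zero _ ht, by rw [V.v_zpow ht, hv, mul_one]⟩

lemma v_add_left {x y : K} (hx : x ≠ 0) (hy : y ≠ 0) (h : V.v x < V.v y) :
    x + y ≠ 0 ∧ V.v (x + y) = V.v x := by
  have hne : x + y ≠ 0 := by
    intro h0
    have hxy : x = -y := eq_neg_of_add_eq_zero_left h0
    rw [hxy, V.v_neg hy] at h; omega
  refine ⟨hne, le_antisymm ?_ ?_⟩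
  · by_contra hlt
    push_neg at hlt
    have h2 := V.v_add hne (neg_ne_zero.mpr hy) (by rw [add_neg_cancel_right]; exact hx)
    rw [add_neg_cancel_right, V.v_neg hy] at h2
    omega
  · have := V.v_add hx hy hne; omega

lemma add_ge (N : ℤ) {u w : K} (hu : u = 0 ∨ N ≤ V.v u) (hw : w = 0 ∨ N ≤ V.v w) :
    u + w = 0 ∨ N ≤ V.v (u + w) := by
  rcases hu with h0 | hu
  · rw [h0, zero_add]; exact hw
  rcases hw with h0 | hw
  · rw [h0, add_zero]; exact Or.inr hu
  by_cases htot : u + w = 0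
  · exact Or.inl htot
  by_cases hu0 : u = 0
  · rw [hu0, zero_add]; exact Or.inr hw
  by_cases hw0 : w = 0
  · rw [hw0, add_zero]; exact Or.inr hu
  right
  have := V.v_add hu0 hw0 htot
  omega

lemma sum_ge {ι : Type*} [DecidableEq ι] (s : Finset ι) (f : ι → K) (N : ℤ)
    (h : ∀ i ∈ s, f i = 0 ∨ N ≤ V.v (f i)) :
    (∑ i ∈ s, f i) = 0 ∨ N ≤ V.v (∑ i ∈ s, f i) := by
  induction s using Finset.induction_on with
  | empty => simp
  | insert _ _ ha ih =>
    rename_i a s'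
    rw [Finset.sum_insert ha]
    have ih' := ih fun i hi => h i (Finset.mem_insert_of_mem hi)
    by_cases hfa : f a = 0
    · rw [hfa, zero_add]; exact ih'
    by_cases hS : (∑ i ∈ s', f i) = 0
    · rw [hS, add_zero]
      rcases h a (Finset.mem_insert_self a s') with h0 | hge
      · exact absurd h0 hfa
      · exact Or.inr hge
    by_cases htot : f a + ∑ i ∈ s', f i = 0
    · exact Or.inl htot
    right
    have hmin := V.v_add hfa hS htot
    rcases h a (Finset.mem_insert_self a s') with h0 | hge
    · exact absurd h0 hfa
    rcases ih' with h0 | hge'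
    · exact absurd h0 hS
    omega

lemma sum_eq {ι : Type*} [DecidableEq ι] (s : Finset ι) (f : ι → K) {j : ι}
    (hj : j ∈ s) (hfj : f j ≠ 0)
    (h : ∀ i ∈ s, i ≠ j → f i = 0 ∨ V.v (f j) < V.v (f i)) :
    (∑ i ∈ s, f i) ≠ 0 ∧ V.v (∑ i ∈ s, f i) = V.v (f j) := by
  rw [← Finset.add_sum_erase s f hj]
  rcases V.sum_ge (s.erase j) f (V.v (f j) + 1)
      (fun i hi => by
        rcases h i (Finset.mem_of_mem_erase hi) (Finset.ne_of_mem_erase hi) with h0 | hlt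
        · exact Or.inl h0
        · exact Or.inr (by omega)) with h0 | hge
  · rw [h0, add_zero]; exact ⟨hfj, rfl⟩
  · by_cases hS : (∑ i ∈ s.erase j, f i) = 0
    · rw [hS, add_zero]; exact ⟨hfj, rfl⟩
    · exact V.v_add_left hfj hS (by omega)

lemma reduce {p : ℕ} (hp : p.Prime) {K : Type*} [Field K] [CharP K p] (V : DVal K)
    (hperf : V.ResiduePerfect p) :
    ∀ n : ℕ, ∀ b : K, (b = 0 ∨ -(n : ℤ) ≤ V.v b) →
      ∃ x : K, (b - (x ^ p - x) = 0) ∨ (0 ≤ V.v (b - (x ^ p - x))) ∨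
        (V.v (b - (x ^ p - x)) < 0 ∧ ¬ ((p : ℤ) ∣ V.v (b - (x ^ p - x)))) := by
  have hFact : Fact p.Prime := ⟨hp⟩
  intro n
  induction n using Nat.strong_induction_on with
  | _ n ih =>
  intro b hb
  have hzero : b - ((0:K) ^ p - 0) = b := by
    rw [zero_pow hp.pos.ne', sub_zero, sub_zero]
  by_cases hb0 : b = 0
  · exact ⟨0, by rw [hzero]; exact Or.inl hb0⟩
  by_cases hbv : 0 ≤ V.v b
  · exact ⟨0, by rw [hzero]; exact Or.inr (Or.inl hbv)⟩
  push_neg at hbv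
  by_cases hdvd : (p : ℤ) ∣ V.v b
  swap
  · exact ⟨0, by rw [hzero]; exact Or.inr (Or.inr ⟨hbv, hdvd⟩)⟩
  -- v b = -m', p ∣ m', 1 ≤ m' ≤ n
  rcases hb with h | hb; · exact absurd h hb0
  obtain ⟨t, ht0, htv⟩ := V.exists_uniformizer
  set m' : ℕ := (-V.v b).toNat with hm'
  have hm'v : V.v b = -(m' : ℤ) := by omega
  obtain ⟨s, hs⟩ : p ∣ m' := by
    have h2 : (p : ℤ) ∣ (m' : ℤ) := by
      rw [hm'v] at hdvd; exact dvd_neg.mp hdvd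
    exact_mod_cast h2
  have hs1 : 1 ≤ s := by nlinarith [hp.two_le, hbv, hm'v, hs]
  have hm'n : (m' : ℤ) ≤ n := by omega
  have hsn : (s : ℤ) ≤ (n : ℤ) - 1 := by
    have h2 : 2 * s ≤ p * s := by nlinarith [hp.two_le]
    omega
  -- u = b * t^m'
  have htm0 : t ^ m' ≠ 0 := pow_ne_zero _ ht0
  set u : K := b * t ^ m' with hu
  have hu0 : u ≠ 0 := mul_ne_zero hb0 htm0
  have huv : V.v u = 0 := by
    rw [hu, V.v_mul hb0 htm0, V.v_pow ht0, htv, hm'v]; ring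
  obtain ⟨c, hcint, hcmax⟩ := hperf u (Or.inr huv.ge)
  have hcint' : c = 0 ∨ 0 ≤ V.v c := hcint
  have hcmax' : u - c ^ p = 0 ∨ 1 ≤ V.v (u - c ^ p) := hcmax
  set x : K := c * (t ^ s)⁻¹ with hx
  have hxp : x ^ p = c ^ p * (t ^ m')⁻¹ := by
    rw [hx, mul_pow, inv_pow, ← pow_mul, mul_comm s p, ← hs]
  have hbxp : b - x ^ p = (u - c ^ p) * (t ^ m')⁻¹ := by
    rw [eq_mul_inv_iff_mul_eq₀ htm0, sub_mul, hxp, inv_mul_cancel_right₀ htm0]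
  have hstep1 : b - x ^ p = 0 ∨ (1 - (m' : ℤ)) ≤ V.v (b - x ^ p) := by
    by_cases hne : u - c ^ p = 0
    · left; rw [hbxp, hne, zero_mul]
    · right
      have h1 : 1 ≤ V.v (u - c ^ p) := hcmax'.resolve_left hne
      rw [hbxp, V.v_mul hne (inv_ne_zero htm0), V.v_inv htm0, V.v_pow ht0, htv]
      omega
  have hxv : x = 0 ∨ -((n:ℤ) - 1) ≤ V.v x := by
    by_cases hc0 : c = 0
    · left; rw [hx, hc0, zero_mul]
    · right
      have hc : 0 ≤ V.v c := hcint'.resolve_left hc0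
      have hxne : x ≠ 0 := mul_ne_zero hc0 (inv_ne_zero (pow_ne_zero _ ht0))
      rw [hx, V.v_mul hc0 (inv_ne_zero (pow_ne_zero _ ht0)), V.v_inv (pow_ne_zero _ ht0),
        V.v_pow ht0, htv]
      omega
  -- b - (x^p - x) = (b - x^p) + x has valuation ≥ -(n-1) ≥ -(n' for some n' < n)... use bound -(n-1)
  have hn1 : 1 ≤ n := by omega
  have hstep : b - (x ^ p - x) = 0 ∨ -((n:ℤ) - 1) ≤ V.v (b - (x ^ p - x)) := by
    have hrw : b - (x ^ p - x) = (b - x ^ p) + x := by ring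
    rw [hrw]
    refine V.add_ge _ ?_ hxv
    rcases hstep1 with h0 | hge
    · exact Or.inl h0
    · right; omega
  -- apply induction hypothesis at n - 1
  obtain ⟨x₂, hx₂⟩ := ih (n - 1) (by omega) (b - (x ^ p - x)) (by
    rcases hstep with h0 | hge
    · exact Or.inl h0
    · right; push_cast; omega)
  refine ⟨x + x₂, ?_⟩
  have hP : (x + x₂) ^ p - (x + x₂) = (x ^ p - x) + (x₂ ^ p - x₂) := by
    rw [add_pow_char]; ring
  have hrw : b - ((x + x₂) ^ p - (x + x₂)) = (b - (x ^ p - x)) - (x₂ ^ p - x₂) := by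
    rw [hP]; ring
  rw [hrw]
  exact hx₂

lemma li_of_distinct {K L : Type*} [Field K] [Field L] [Algebra K L] (V : DVal L)
    {n : ℕ} (w : Fin n → L) (hw : ∀ i, w i ≠ 0)
    (hdist : ∀ (i j : Fin n) (g h : K), g ≠ 0 → h ≠ 0 →
      V.v (algebraMap K L g * w i) = V.v (algebraMap K L h * w j) → i = j) :
    LinearIndependent K w := by
  rw [Fintype.linearIndependent_iff]
  intro g hg
  by_contra hne
  push_neg at hne
  obtain ⟨i0, hi0⟩ := hne
  classical
  set f : Fin n → L := fun j => algebraMap K L (g j) * w j with hf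
  have hsum : ∑ j, f j = 0 := by
    rw [← hg]
    refine Finset.sum_congr rfl fun j _ => ?_
    rw [hf, Algebra.smul_def]
  set s : Finset (Fin n) := Finset.univ.filter (fun j => g j ≠ 0) with hs
  have hi0s : i0 ∈ s := by simp [hs, hi0]
  obtain ⟨j0, hj0s, hmin⟩ := s.exists_min_image (fun j => V.v (f j)) ⟨i0, hi0s⟩
  have hgj0 : g j0 ≠ 0 := by simpa [hs] using hj0s
  have halg : ∀ gg : K, gg ≠ 0 → algebraMap K L gg ≠ 0 := fun gg h =>
    fun h0 => h ((algebraMap K L).injective ((algebraMap K L).map_zero ▸ h0))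
  have hfj0 : f j0 ≠ 0 := mul_ne_zero (halg _ hgj0) (hw j0)
  have := V.sum_eq Finset.univ f (Finset.mem_univ j0) hfj0 (fun k _ hk => by
    by_cases hgk : g k = 0
    · left; rw [hf]; simp [hgk]
    · right
      have hks : k ∈ s := by simp [hs, hgk]
      have hle := hmin k hks
      have hne2 : V.v (f j0) ≠ V.v (f k) := fun hv => hk (hdist _ _ _ _ hgk hgj0 hv.symm)
      omega)
  exact this.1 hsum

end DVal

set_option maxHeartbeats 2000000 in
/-- **Proposition `ls`(a)**: let `K` be a complete discrete valuation field of
characteristic `p > 0` with perfect residue field, `L/K` a ramified Artin–Schreier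
extension defined by `x^p − x = a` with `a ∈ K ∖ P(K)`, and `m_a > 0` the smallest
integer such that the image of `a` lies in `F_{m_a}H¹(K)`.  Then the valuation of the
different of `L/K` is `(m_a + 1)(p − 1)`; equivalently, the inverse different
`{x ∈ L | Tr_{L/K}(x·𝒪_L) ⊆ 𝒪_K}` equals `𝔪_L^{-(m_a+1)(p-1)}`. -/
theorem stmt14 (p : ℕ) (hp : p.Prime)
    (K : Type*) [Field K] [CharP K p]
    (VK : DVal K) (hcomp : VK.IsComplete) (hperf : VK.ResiduePerfect p)
    (L : Type*) [Field L] [Algebra K L] [FiniteDimensional K L] (VL : DVal L)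
    (a : K) (hnotP : ¬∃ x : K, x ^ p - x = a)
    (y : L) (hy : y ^ p - y = algebraMap K L a)
    (hgen : IntermediateField.adjoin K {y} = ⊤)
    -- `L/K` is an extension of complete discrete valuation fields, ramified:
    (e : ℤ) (hext : ∀ x : K, x ≠ 0 → VL.v (algebraMap K L x) = e * VK.v x)
    (hram : 1 < e)
    -- `m_a` is the smallest integer with the class of `a` in `F_{m_a}H¹(K)`:
    (ma : ℤ) (hma_pos : 0 < ma)
    (hma : IsLeast {m : ℤ | ∃ x : K, VK.Fil m (a - (x ^ p - x))} ma) :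
    ∀ x : L,
      (∀ z : L, VL.integer z → VK.integer (Algebra.trace K L (x * z))) ↔
        (x = 0 ∨ -((ma + 1) * ((p : ℤ) - 1)) ≤ VL.v x) := by
  have hp2 : 2 ≤ p := hp.two_le
  have hFact : Fact p.Prime := ⟨hp⟩
  -- Step 1: find a good representative a' = a - (x2^p - x2) with v(a') = -ma, p ∤ ma.
  have hPadd : ∀ u w : K, (u + w) ^ p - (u + w) = (u ^ p - u) + (w ^ p - w) := by
    intro u w; rw [add_pow_char]; ring
  obtain ⟨x0, hx0⟩ := hma.1
  have hb0 : a - (x0 ^ p - x0) ≠ 0 := fun h0 => hnotP ⟨x0, (sub_eq_zero.mp h0).symm⟩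
  obtain ⟨x1, hx1⟩ := DVal.reduce hp VK hperf ma.toNat (a - (x0 ^ p - x0)) (by
    rcases hx0 with h0 | hge
    · exact absurd h0 hb0
    · right; omega)
  obtain ⟨x2, a', ha', ha'2⟩ : ∃ x2 a' : K, a' = a - (x2 ^ p - x2) ∧
      a' = a - (x0 ^ p - x0) - (x1 ^ p - x1) :=
    ⟨x0 + x1, _, rfl, by linear_combination -hPadd x0 x1⟩
  rw [← ha'2] at hx1
  have hnot' : ∀ x : K, a' - (x ^ p - x) ≠ 0 := fun x h0 =>
    hnotP ⟨x2 + x, by linear_combination hPadd x2 x + ha' - h0⟩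
  have ha'ne : a' ≠ 0 := by
    have h := hnot' 0
    rwa [zero_pow hp.pos.ne', sub_zero, sub_zero] at h
  have hmemS : ∀ (x : K) (m : ℤ), -m ≤ VK.v (a' - (x ^ p - x)) → ma ≤ m := by
    intro x m hm
    refine hma.2 ⟨x2 + x, ?_⟩
    have h1 : a - ((x2 + x) ^ p - (x2 + x)) = a' - (x ^ p - x) := by
      linear_combination -hPadd x2 x - ha'
    rw [h1]
    exact Or.inr hm
  have hzrw : a' - ((0:K) ^ p - 0) = a' := by
    rw [zero_pow hp.pos.ne', sub_zero, sub_zero]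
  have ha'neg : VK.v a' < 0 := by
    by_contra h
    push_neg at h
    have := hmemS 0 0 (by rw [hzrw]; omega)
    omega
  have hx1' : ¬ ((p:ℤ) ∣ VK.v a') := by
    rcases hx1 with h0 | h0 | hok
    · exact absurd h0 ha'ne
    · omega
    · exact hok.2
  -- Pw analysis: if a' - P w has valuation > v a' (or is 0... it can't be 0), then p ∣ -v a' fails
  have hma_le : ma ≤ -VK.v a' := hmemS 0 (-VK.v a') (by rw [hzrw]; omega)
  have hle2 : -VK.v a' ≤ ma := by
    by_contra hcon
    push_neg at hcon
    have hw : a - (x0 ^ p - x0) = a' - ((x0 - x2) ^ p - (x0 - x2)) := by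
      linear_combination -hPadd x2 (x0 - x2) - ha'
    set w := x0 - x2 with hwdef
    have hge : -ma ≤ VK.v (a' - (w ^ p - w)) := by
      rcases hx0 with h0 | hge
      · exact absurd h0 hb0
      · rwa [hw] at hge
    have hne1 : a' - (w ^ p - w) ≠ 0 := hnot' w
    have hlt : VK.v a' < VK.v (a' - (w ^ p - w)) := by omega
    have hPw := VK.v_add_left ha'ne (neg_ne_zero.mpr hne1) (by rwa [VK.v_neg hne1])
    rw [show a' + -(a' - (w ^ p - w)) = w ^ p - w by ring] at hPw
    obtain ⟨hPwne, hPwv⟩ := hPw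
    have hwne : w ≠ 0 := by
      intro h0
      rw [h0, zero_pow hp.pos.ne', sub_zero] at hPwne
      exact hPwne rfl
    by_cases hwv : VK.v w < 0
    · have hppos : VK.v (w ^ p) < VK.v (-w) := by
        rw [VK.v_pow hwne, VK.v_neg hwne]
        nlinarith [hp2, hwv]
      have h2 := VK.v_add_left (pow_ne_zero p hwne) (neg_ne_zero.mpr hwne) hppos
      rw [show w ^ p + -w = w ^ p - w by ring] at h2
      rw [h2.2, VK.v_pow hwne] at hPwv
      exact hx1' ⟨VK.v w, hPwv.symm⟩
    · push_neg at hwv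
      have h2 : w ^ p - w = 0 ∨ 0 ≤ VK.v (w ^ p - w) := by
        rw [show w ^ p - w = w ^ p + -w by ring]
        refine VK.add_ge 0 (Or.inr ?_) (Or.inr ?_)
        · rw [VK.v_pow hwne]; exact mul_nonneg (by positivity) hwv
        · rw [VK.v_neg hwne]; exact hwv
      rcases h2 with h0 | hge2
      · exact hPwne h0
      · omega
  have ha'v : VK.v a' = -ma := by omega
  have hpma : ¬ ((p:ℤ) ∣ ma) := fun hdvd => hx1' (by rw [ha'v]; exact dvd_neg.mpr hdvd)
  -- Step 2: y' = y - x2, its valuation; e = p; finrank = p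
  have hinj : Function.Injective (algebraMap K L) := (algebraMap K L).injective
  have halgne : ∀ g : K, g ≠ 0 → algebraMap K L g ≠ 0 := fun g hg h0 =>
    hg (hinj (by rw [h0, map_zero]))
  haveI hCharL : CharP L p := charP_of_injective_algebraMap hinj p
  have hPaddL : ∀ u w : L, (u + w) ^ p - (u + w) = (u ^ p - u) + (w ^ p - w) := by
    intro u w; rw [add_pow_char]; ring
  have hmap : algebraMap K L a'
      = algebraMap K L a - ((algebraMap K L x2) ^ p - algebraMap K L x2) := by
    rw [ha', map_sub, map_sub, map_pow]
  obtain ⟨y', hy'def, hy'⟩ : ∃ y' : L, y' = y - algebraMap K L x2 ∧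
      y' ^ p - y' = algebraMap K L a' :=
    ⟨y - algebraMap K L x2, rfl, by
      linear_combination -hPaddL (y - algebraMap K L x2) (algebraMap K L x2) + hy - hmap⟩
  have hAne : algebraMap K L a' ≠ 0 := halgne a' ha'ne
  have hAv : VL.v (algebraMap K L a') = -(e * ma) := by rw [hext a' ha'ne, ha'v]; ring
  have hema : 0 < e * ma := mul_pos (by omega) hma_pos
  have hy'ne : y' ≠ 0 := by
    intro h0
    rw [h0, zero_pow hp.pos.ne', sub_zero] at hy'
    exact hAne hy'.symm
  have hy'neg : VL.v y' < 0 := by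
    by_contra h
    push_neg at h
    have h2 : y' ^ p + -y' = 0 ∨ 0 ≤ VL.v (y' ^ p + -y') := by
      refine VL.add_ge 0 (Or.inr ?_) (Or.inr ?_)
      · rw [VL.v_pow hy'ne]; exact mul_nonneg (by positivity) h
      · rw [VL.v_neg hy'ne]; exact h
    rw [show y' ^ p + -y' = y' ^ p - y' by ring, hy'] at h2
    rcases h2 with h0 | hge
    · exact hAne h0
    · omega
  have hy'v : (p : ℤ) * VL.v y' = -(e * ma) := by
    have h2 := VL.v_add_left (pow_ne_zero p hy'ne) (neg_ne_zero.mpr hy'ne) (by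
      rw [VL.v_pow hy'ne, VL.v_neg hy'ne]
      nlinarith [hp2, hy'neg])
    rw [show y' ^ p + -y' = y' ^ p - y' by ring, hy'] at h2
    rw [h2.2, VL.v_pow hy'ne] at hAv
    exact hAv
  have hpe : (p:ℤ) ∣ e := by
    have hd : (p:ℤ) ∣ e * ma := ⟨-(VL.v y'), by linarith⟩
    rcases ((Nat.prime_iff_prime_int.mp hp).dvd_mul.mp hd) with h | h
    · exact h
    · exact absurd h hpma
  have hep : (p:ℤ) ≤ e := Int.le_of_dvd (by omega) hpe
  -- finrank ≤ p
  have hfr_le : Module.finrank K L ≤ p := by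
    obtain ⟨p1, hp1⟩ : ∃ q, p = q + 1 := ⟨p - 1, by omega⟩
    have hdegC : (Polynomial.X + Polynomial.C a : Polynomial K).degree ≤ (p1 : ℕ) := by
      rw [Polynomial.degree_X_add_C]
      exact_mod_cast Nat.one_le_iff_ne_zero.mpr (by omega)
    have hmono : (Polynomial.X ^ p - (Polynomial.X + Polynomial.C a) : Polynomial K).Monic := by
      rw [hp1]
      exact Polynomial.monic_X_pow_sub (lt_of_le_of_lt hdegC
        (by exact_mod_cast Nat.lt_succ_self p1))
    have haev : (Polynomial.aeval y) (Polynomial.X ^ p - (Polynomial.X + Polynomial.C a)) = 0 := by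
      rw [map_sub, map_add, Polynomial.aeval_X_pow, Polynomial.aeval_X, Polynomial.aeval_C]
      linear_combination hy
    have hyint : IsIntegral K y := ⟨_, hmono, haev⟩
    have hdegf : (Polynomial.X ^ p - (Polynomial.X + Polynomial.C a) : Polynomial K).degree
        = p := by
      rw [Polynomial.degree_sub_eq_left_of_degree_lt, Polynomial.degree_X_pow]
      rw [Polynomial.degree_X_pow]
      calc (Polynomial.X + Polynomial.C a : Polynomial K).degree ≤ (p1:ℕ) := hdegC
        _ < (p : ℕ) := by exact_mod_cast Nat.lt_of_lt_of_le (Nat.lt_succ_self p1) (by omega)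
    have h1 : Module.finrank K (IntermediateField.adjoin K {y}) = (minpoly K y).natDegree :=
      IntermediateField.adjoin.finrank hyint
    rw [hgen, IntermediateField.finrank_top'] at h1
    rw [h1]
    have hdvd := minpoly.dvd K y haev
    have := Polynomial.natDegree_le_of_dvd hdvd hmono.ne_zero
    rwa [Polynomial.natDegree_eq_of_degree_eq_some hdegf] at this
  -- e ≤ finrank via uniformizer powers
  have he_le : e ≤ Module.finrank K L := by
    obtain ⟨π, hπ0, hπv⟩ := VL.exists_uniformizer
    have hli1 : LinearIndependent K (fun i : Fin e.toNat => π ^ (i:ℕ)) := by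
      refine DVal.li_of_distinct VL _ (fun i => pow_ne_zero _ hπ0) ?_
      intro i j g h hg hh hv
      rw [VL.v_mul (halgne g hg) (pow_ne_zero _ hπ0), VL.v_mul (halgne h hh) (pow_ne_zero _ hπ0),
        VL.v_pow hπ0, VL.v_pow hπ0, hπv, hext g hg, hext h hh] at hv
      have hij : (i:ℤ) - (j:ℤ) = e * (VK.v h - VK.v g) := by linarith
      have hib : (i:ℤ) < e.toNat := by exact_mod_cast i.2
      have hjb : (j:ℤ) < e.toNat := by exact_mod_cast j.2
      have het : (e.toNat : ℤ) = e := Int.toNat_of_nonneg (by omega)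
      have : (i:ℤ) = (j:ℤ) := by
        rcases lt_trichotomy (VK.v h - VK.v g) 0 with hc | hc | hc
        · nlinarith
        · rw [hc, mul_zero] at hij; omega
        · nlinarith
      exact Fin.ext (by exact_mod_cast this)
    have := hli1.fintype_card_le_finrank
    rw [Fintype.card_fin] at this
    omega
  have he : e = (p:ℤ) := by omega
  have hfr : Module.finrank K L = p := by omega
  have hy'vv : VL.v y' = -ma := by
    rw [he] at hy'v
    have : (p:ℤ) * VL.v y' = (p:ℤ) * (-ma) := by linarith
    exact mul_left_cancel₀ (by positivity) this
  -- Step 3: power basis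
  have hterm : ∀ (g : K) (i : ℕ), g ≠ 0 →
      VL.v (algebraMap K L g * y' ^ i) = (p:ℤ) * VK.v g - i * ma := by
    intro g i hg
    rw [VL.v_mul (halgne g hg) (pow_ne_zero _ hy'ne), VL.v_pow hy'ne, hext g hg, he, hy'vv]
    ring
  have hli2 : LinearIndependent K (fun i : Fin p => y' ^ (i:ℕ)) := by
    refine DVal.li_of_distinct VL _ (fun i => pow_ne_zero _ hy'ne) ?_
    intro i j g h hg hh hv
    rw [hterm g i hg, hterm h j hh] at hv
    have hd : (p:ℤ) ∣ ((i:ℤ) - (j:ℤ)) * ma := ⟨VK.v g - VK.v h, by linarith⟩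
    rcases ((Nat.prime_iff_prime_int.mp hp).dvd_mul.mp hd) with hdd | hdd
    swap
    · exact absurd hdd hpma
    obtain ⟨k, hk⟩ := hdd
    have hib : (i:ℤ) < p := by exact_mod_cast i.2
    have hjb : (j:ℤ) < p := by exact_mod_cast j.2
    have : (i:ℤ) = (j:ℤ) := by
      have hmb : 1 ≤ ma := hma_pos
      rcases lt_trichotomy k 0 with hc | hc | hc
      · nlinarith
      · rw [hc, mul_zero] at hk
        have : ((i:ℤ) - (j:ℤ)) * ma = 0 := by rw [hk]; ring
        rcases mul_eq_zero.mp this with h0 | h0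
        · omega
        · omega
      · nlinarith
    exact Fin.ext (by exact_mod_cast this)
  have hcard : Fintype.card (Fin p) = Module.finrank K L := by rw [Fintype.card_fin, hfr]
  set B : Module.Basis (Fin p) K L := basisOfLinearIndependentOfCardEqFinrank hli2 hcard with hBdef
  have hB : ∀ i : Fin p, B i = y' ^ (i:ℕ) := fun i => by
    rw [hBdef, coe_basisOfLinearIndependentOfCardEqFinrank]
  classical
  -- distinctness of monomial valuations
  have hdisteq : ∀ (i j : Fin p) (g h : K), g ≠ 0 → h ≠ 0 →
      VL.v (algebraMap K L g * y' ^ (i:ℕ)) = VL.v (algebraMap K L h * y' ^ (j:ℕ)) → i = j := by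
    intro i j g h hg hh hv
    rw [hterm g i hg, hterm h j hh] at hv
    have hd : (p:ℤ) ∣ ((i:ℤ) - (j:ℤ)) * ma := ⟨VK.v g - VK.v h, by linarith⟩
    rcases ((Nat.prime_iff_prime_int.mp hp).dvd_mul.mp hd) with hdd | hdd
    swap
    · exact absurd hdd hpma
    obtain ⟨k, hk⟩ := hdd
    have hib : (i:ℤ) < p := by exact_mod_cast i.2
    have hjb : (j:ℤ) < p := by exact_mod_cast j.2
    have : (i:ℤ) = (j:ℤ) := by
      rcases lt_trichotomy k 0 with hc | hc | hc
      · nlinarith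
      · rw [hc, mul_zero] at hk; omega
      · nlinarith
    exact Fin.ext (by exact_mod_cast this)
  -- Step 4: coordinates determine valuation
  have hsmulrw : ∀ (w : L) (j : Fin p),
      B.repr w j • B j = algebraMap K L (B.repr w j) * y' ^ (j:ℕ) := by
    intro w j; rw [Algebra.smul_def, hB]
  have hcoord : ∀ (w : L) (N : ℤ), (w = 0 ∨ N ≤ VL.v w) ↔
      ∀ i : Fin p, (B.repr w i = 0 ∨ N ≤ (p:ℤ) * VK.v (B.repr w i) - (i:ℕ) * ma) := by
    intro w N
    have hwsum : w = ∑ j : Fin p, algebraMap K L (B.repr w j) * y' ^ (j:ℕ) := by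
      conv_lhs => rw [← B.sum_repr w]
      exact Finset.sum_congr rfl fun j _ => hsmulrw w j
    constructor
    · rintro hval i
      by_cases hbi : B.repr w i = 0
      · exact Or.inl hbi
      right
      have hwne : w ≠ 0 := by
        intro h0; rw [h0] at hbi; simp at hbi
      replace hval : N ≤ VL.v w := hval.resolve_left hwne
      set f : Fin p → L := fun j => algebraMap K L (B.repr w j) * y' ^ (j:ℕ) with hf
      set s : Finset (Fin p) := Finset.univ.filter (fun j => B.repr w j ≠ 0) with hs
      have his : i ∈ s := by simp [hs, hbi]
      obtain ⟨j0, hj0s, hmin⟩ := s.exists_min_image (fun j => VL.v (f j)) ⟨i, his⟩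
      have hgj0 : B.repr w j0 ≠ 0 := by simpa [hs] using hj0s
      have hfj0 : f j0 ≠ 0 := mul_ne_zero (halgne _ hgj0) (pow_ne_zero _ hy'ne)
      have hsum := VL.sum_eq Finset.univ f (Finset.mem_univ j0) hfj0 (fun k _ hk => by
        by_cases hgk : B.repr w k = 0
        · left; rw [hf]; simp [hgk]
        · right
          have hks : k ∈ s := by simp [hs, hgk]
          have hle := hmin k hks
          have hne2 : VL.v (f j0) ≠ VL.v (f k) := fun hv =>
            hk (hdisteq _ _ _ _ hgj0 hgk hv).symm
          omega)
      rw [← hwsum] at hsum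
      have h1 : VL.v (f j0) ≤ VL.v (f i) := hmin i his
      rw [hf] at h1
      simp only at h1
      rw [hterm _ j0 hgj0, hterm _ i hbi] at h1
      have h2 : N ≤ (p:ℤ) * VK.v (B.repr w j0) - (j0:ℕ) * ma := by
        rw [← hterm _ j0 hgj0, ← hsum.2]; exact hval
      omega
    · intro h
      have := VL.sum_ge Finset.univ (fun j => algebraMap K L (B.repr w j) * y' ^ (j:ℕ)) N
        (fun j _ => by
          by_cases h0 : B.repr w j = 0
          · left; simp [h0]
          · right
            rw [hterm _ j h0]
            exact (h j).resolve_left h0)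
      rw [← hwsum] at this
      exact this
  -- Step 5: trace table
  haveI : NeZero p := ⟨hp.pos.ne'⟩
  set T : ℕ → K := fun r => Algebra.trace K L (y' ^ r) with hT
  have hT0 : T 0 = 0 := by
    rw [hT]
    simp only [pow_zero]
    rw [← map_one (algebraMap K L), Algebra.trace_algebraMap, hfr]
    simp [CharP.cast_eq_zero K p]
  have hrepr_small : ∀ (s : ℕ) (hs : s < p) (i : Fin p),
      B.repr (y' ^ s) i = if (i:ℕ) = s then 1 else 0 := by
    intro s hs i
    have h1 : y' ^ s = B ⟨s, hs⟩ := (hB ⟨s, hs⟩).symm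
    rw [h1, B.repr_self]
    rw [Finsupp.single_apply]
    congr 1
    simp [Fin.ext_iff, eq_comm]
  have hy'p : y' ^ p = y' + algebraMap K L a' := by linear_combination hy'
  have hpow_add : ∀ t : ℕ, y' ^ (p + t) = y' ^ (t+1) + algebraMap K L a' * y' ^ t := by
    intro t; rw [pow_add, hy'p]; ring
  have hrepr_mid : ∀ (t : ℕ) (ht : t + 1 < p) (i : Fin p),
      B.repr (y' ^ (p + t)) i
        = (if (i:ℕ) = t+1 then 1 else 0) + a' * (if (i:ℕ) = t then 1 else 0) := by
    intro t ht i
    rw [hpow_add t, ← Algebra.smul_def, map_add, map_smul, Finsupp.add_apply,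
      Finsupp.smul_apply, smul_eq_mul, hrepr_small (t+1) ht i, hrepr_small t (by omega) i]
  have htrace_pow : ∀ r : ℕ, T r = ∑ i : Fin p, B.repr (y' ^ (r + (i:ℕ))) i := by
    intro r
    rw [hT]
    simp only
    rw [Algebra.trace_eq_matrix_trace B, Matrix.trace]
    refine Finset.sum_congr rfl fun i _ => ?_
    rw [Matrix.diag_apply, Algebra.leftMulMatrix_eq_repr_mul, hB, ← pow_add]
  have hTr : ∀ r : ℕ, 1 ≤ r → r < p → T r = if r = p - 1 then (-1:K) else 0 := by
    intro r h1 h2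
    rw [htrace_pow r]
    have hterm2 : ∀ i : Fin p, B.repr (y' ^ (r + (i:ℕ))) i
        = if p ≤ r + (i:ℕ) ∧ r = p - 1 then 1 else 0 := by
      intro i
      rcases lt_or_ge (r + (i:ℕ)) p with hsm | hbg
      · rw [hrepr_small _ hsm i]
        have hne : ¬ ((i:ℕ) = r + (i:ℕ)) := by omega
        have hne2 : ¬ (p ≤ r + (i:ℕ) ∧ r = p - 1) := by omega
        rw [if_neg hne, if_neg hne2]
      · have hexp : r + (i:ℕ) = p + (r + (i:ℕ) - p) := by omega
        rw [hexp, hrepr_mid _ (by omega) i]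
        have hit : ¬ ((i:ℕ) = r + (i:ℕ) - p) := by
          intro h0
          have := i.2
          omega
        rw [if_neg hit, mul_zero, add_zero]
        by_cases hcase : r = p - 1
        · rw [if_pos (by omega), if_pos (by omega)]
        · rw [if_neg (by omega), if_neg (by omega)]
    rw [Finset.sum_congr rfl fun i _ => hterm2 i]
    by_cases hcase : r = p - 1
    · rw [if_pos hcase]
      have hsum : ∀ i : Fin p, (if p ≤ r + (i:ℕ) ∧ r = p - 1 then (1:K) else 0)
          = if i ∈ Finset.univ.erase (0 : Fin p) then (1:K) else 0 := by
        intro i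
        have : (p ≤ r + (i:ℕ) ∧ r = p - 1) ↔ i ∈ Finset.univ.erase (0 : Fin p) := by
          simp only [Finset.mem_erase, Finset.mem_univ, and_true]
          constructor
          · intro ⟨hh, _⟩; intro h0; rw [h0] at hh; simp at hh; omega
          · intro hne
            have : (i:ℕ) ≠ 0 := fun h0 => hne (Fin.ext (by simpa using h0))
            omega
        simp only [this]
      rw [Finset.sum_congr rfl fun i _ => hsum i, Finset.sum_ite_mem,
        Finset.univ_inter, Finset.sum_const]
      rw [Finset.card_erase_of_mem (Finset.mem_univ _), Finset.card_univ, Fintype.card_fin]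
      have : ((p - 1 : ℕ) : K) = -1 := by
        have : ((p - 1 : ℕ) : K) = (p : K) - 1 := by
          push_cast [Nat.cast_sub (by omega : 1 ≤ p)]
          ring
        rw [this, CharP.cast_eq_zero K p]
        ring
      rw [nsmul_eq_mul, this, mul_one]
    · rw [if_neg hcase]
      refine Finset.sum_eq_zero fun i _ => ?_
      rw [if_neg (by tauto)]
  have hTbig : ∀ t : ℕ, t ≤ p - 2 → T (p + t) = if t = p - 2 then (-1:K) else 0 := by
    intro t ht
    have h1 : T (p + t) = T (t+1) + a' * T t := by
      rw [hT]
      simp only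
      rw [hpow_add t, ← Algebra.smul_def, map_add, map_smul, smul_eq_mul]
    rw [h1, hTr (t+1) (by omega) (by omega)]
    have h2 : a' * T t = 0 := by
      rcases Nat.eq_zero_or_pos t with h0 | hpos
      · rw [h0, hT0, mul_zero]
      · rw [hTr t hpos (by omega), if_neg (by omega), mul_zero]
    rw [h2, add_zero]
    by_cases hcase : t = p - 2
    · rw [if_pos (by omega), if_pos hcase]
    · rw [if_neg (by omega), if_neg hcase]
  have hTsum : ∀ i j : Fin p, T ((i:ℕ) + (j:ℕ))
      = if (i:ℕ) + (j:ℕ) = p - 1 ∨ ((i:ℕ) = p - 1 ∧ (j:ℕ) = p - 1) then (-1:K) else 0 := by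
    intro i j
    have hi := i.2
    have hj := j.2
    rcases Nat.eq_zero_or_pos ((i:ℕ) + (j:ℕ)) with h0 | hpos
    · rw [h0, hT0, if_neg (by omega)]
    rcases lt_or_ge ((i:ℕ) + (j:ℕ)) p with hsm | hbg
    · rw [hTr _ hpos hsm]
      by_cases hcase : (i:ℕ) + (j:ℕ) = p - 1
      · rw [if_pos hcase, if_pos (Or.inl hcase)]
      · rw [if_neg hcase, if_neg (by omega)]
    · have hexp : (i:ℕ) + (j:ℕ) = p + ((i:ℕ) + (j:ℕ) - p) := by omega
      rw [hexp, hTbig _ (by omega)]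
      by_cases hcase : (i:ℕ) + (j:ℕ) - p = p - 2
      · rw [if_pos hcase, if_pos (Or.inr (by omega))]
      · rw [if_neg hcase, if_neg (by omega)]
  -- Step 6: trace bilinear formula
  have htf : ∀ w z : L, Algebra.trace K L (w * z)
      = ∑ i : Fin p, ∑ j : Fin p, (B.repr w i * B.repr z j) * T ((i:ℕ) + (j:ℕ)) := by
    intro w z
    have hprod : w * z = ∑ i : Fin p, ∑ j : Fin p,
        (B.repr w i * B.repr z j) • y' ^ ((i:ℕ) + (j:ℕ)) := by
      conv_lhs => rw [← B.sum_repr w, ← B.sum_repr z]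
      rw [Finset.sum_mul_sum]
      refine Finset.sum_congr rfl fun i _ => Finset.sum_congr rfl fun j _ => ?_
      rw [hB, hB, smul_mul_smul_comm, pow_add]
    rw [hprod, map_sum]
    refine Finset.sum_congr rfl fun i _ => ?_
    rw [map_sum]
    refine Finset.sum_congr rfl fun j _ => ?_
    rw [map_smul, smul_eq_mul]
  have hmono_repr : ∀ (c : K) (j0 j : Fin p),
      B.repr (algebraMap K L c * y' ^ (j0:ℕ)) j = if j = j0 then c else 0 := by
    intro c j0 j
    rw [← Algebra.smul_def, ← hB j0, map_smul, Finsupp.smul_apply, B.repr_self,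
      Finsupp.single_apply, smul_eq_mul]
    by_cases hcase : j = j0
    · rw [if_pos hcase.symm, if_pos hcase, mul_one]
    · rw [if_neg (Ne.symm hcase), if_neg hcase, mul_zero]
  have hceil : ∀ A : ℤ, ∃ c : K, c ≠ 0 ∧ A ≤ (p:ℤ) * VK.v c ∧ (p:ℤ) * VK.v c ≤ A + p - 1 := by
    intro A
    obtain ⟨c, hc0, hcv⟩ := VK.exists_v (-((-A) / (p:ℤ)))
    refine ⟨c, hc0, ?_, ?_⟩ <;> rw [hcv]
    all_goals {
      have h1 := Int.mul_ediv_add_emod (-A) (p:ℤ)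
      have h2 := Int.emod_nonneg (-A) (show (p:ℤ) ≠ 0 by positivity)
      have h3 := Int.emod_lt_of_pos (-A) (show (0:ℤ) < p by positivity)
      have h4 : (p:ℤ) * (-((-A) / (p:ℤ))) = A + (-A) % (p:ℤ) := by linear_combination -h1
      linarith }
  have hposdiv : ∀ V2 : ℤ, 1 - (p:ℤ) ≤ (p:ℤ) * V2 → 0 ≤ V2 := by
    intro V2 hV
    by_contra hneg
    push_neg at hneg
    have : (p:ℤ) * V2 ≤ (p:ℤ) * (-1) :=
      mul_le_mul_of_nonneg_left (by omega) (by positivity)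
    omega
  have hpZ : (2:ℤ) ≤ (p:ℤ) := by exact_mod_cast hp2
  have hmann : (0:ℤ) ≤ (ma + 1) * ((p:ℤ) - 1) := mul_nonneg (by omega) (by omega)
  -- Final equivalence
  intro x
  rw [hcoord x (-((ma + 1) * ((p : ℤ) - 1)))]
  constructor
  · -- forward: trace condition implies coordinate bounds
    intro H i
    have hkey : ∀ i' : Fin p, 1 ≤ (i':ℕ) →
        (B.repr x i' = 0 ∨
          -((ma + 1) * ((p:ℤ) - 1)) ≤ (p:ℤ) * VK.v (B.repr x i') - ((i':ℕ):ℤ) * ma) := by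
      intro i' hi1
      by_cases hbi : B.repr x i' = 0
      · exact Or.inl hbi
      right
      have hilt := i'.2
      have hj0lt : p - 1 - (i':ℕ) < p := by omega
      set j0 : Fin p := ⟨p - 1 - (i':ℕ), hj0lt⟩ with hj0def
      have hj0v : (j0:ℕ) = p - 1 - (i':ℕ) := rfl
      obtain ⟨c, hc0, hcA, hcB⟩ := hceil (((j0:ℕ):ℤ) * ma)
      have hzint : VL.integer (algebraMap K L c * y' ^ (j0:ℕ)) := Or.inr (by
        rw [hterm c _ hc0]; linarith [hcA])
      have htr := H _ hzint
      have htrval : Algebra.trace K L (x * (algebraMap K L c * y' ^ (j0:ℕ)))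
          = ∑ i2 : Fin p, (B.repr x i2 * c) * T ((i2:ℕ) + (j0:ℕ)) := by
        rw [htf x _]
        refine Finset.sum_congr rfl fun i2 _ => ?_
        rw [Finset.sum_eq_single_of_mem j0 (Finset.mem_univ _) (fun j _ hj => by
          rw [hmono_repr, if_neg hj, mul_zero, zero_mul]), hmono_repr, if_pos rfl]
      have hcollapse : Algebra.trace K L (x * (algebraMap K L c * y' ^ (j0:ℕ)))
          = -(B.repr x i' * c) := by
        rw [htrval]
        have hper : ∀ i2 : Fin p, (B.repr x i2 * c) * T ((i2:ℕ) + (j0:ℕ))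
            = if i2 = i' then -(B.repr x i' * c) else 0 := by
          intro i2
          rw [hTsum i2 j0]
          by_cases hcase : i2 = i'
          · rw [if_pos (Or.inl (by rw [hcase, hj0v]; omega)), if_pos hcase, hcase, mul_neg_one]
          · rw [if_neg ?_, if_neg hcase, mul_zero]
            rintro (hor | ⟨h1, h2⟩)
            · rw [hj0v] at hor
              exact hcase (Fin.ext (by omega))
            · rw [hj0v] at h2; omega
        rw [Finset.sum_congr rfl fun i2 _ => hper i2,
          Finset.sum_ite_eq' Finset.univ i' _, if_pos (Finset.mem_univ _)]
      have htr' : -(B.repr x i' * c) = 0 ∨ 0 ≤ VK.v (-(B.repr x i' * c)) := by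
        rw [← hcollapse]; exact htr
      have hmul : B.repr x i' * c ≠ 0 := mul_ne_zero hbi hc0
      rcases htr' with h0 | hge
      · exact absurd (neg_eq_zero.mp h0) hmul
      rw [VK.v_neg hmul, VK.v_mul hbi hc0] at hge
      have hj0Z : ((j0:ℕ):ℤ) = (p:ℤ) - 1 - ((i':ℕ):ℤ) := by rw [hj0v]; omega
      have hprod : ((j0:ℕ):ℤ) * ma = ((p:ℤ) - 1 - ((i':ℕ):ℤ)) * ma := by rw [hj0Z]
      have hmulp := mul_le_mul_of_nonneg_left hge (show (0:ℤ) ≤ (p:ℤ) by positivity)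
      nlinarith [hcB, hprod, hmulp]
    rcases Nat.eq_zero_or_pos (i:ℕ) with hi0 | hi1
    swap
    · exact hkey i hi1
    by_cases hb0 : B.repr x i = 0
    · exact Or.inl hb0
    right
    set ilast : Fin p := ⟨p - 1, by omega⟩ with hilastdef
    have hlastv : (ilast:ℕ) = p - 1 := rfl
    have hblast := hkey ilast (by rw [hlastv]; omega)
    have hlastZ : ((ilast:ℕ):ℤ) = (p:ℤ) - 1 := by rw [hlastv]; omega
    have hblast0 : B.repr x ilast = 0 ∨ 0 ≤ VK.v (B.repr x ilast) := by
      rcases hblast with h0 | hge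
      · exact Or.inl h0
      · right
        refine hposdiv _ ?_
        have hprod : ((ilast:ℕ):ℤ) * ma = ((p:ℤ) - 1) * ma := by rw [hlastZ]
        nlinarith [hge, hprod]
    obtain ⟨c, hc0, hcA, hcB⟩ := hceil (((ilast:ℕ):ℤ) * ma)
    have hzint : VL.integer (algebraMap K L c * y' ^ (ilast:ℕ)) := Or.inr (by
      rw [hterm c _ hc0]; linarith [hcA])
    have htr := H _ hzint
    have htrval : Algebra.trace K L (x * (algebraMap K L c * y' ^ (ilast:ℕ)))
        = ∑ i2 : Fin p, (B.repr x i2 * c) * T ((i2:ℕ) + (ilast:ℕ)) := by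
      rw [htf x _]
      refine Finset.sum_congr rfl fun i2 _ => ?_
      rw [Finset.sum_eq_single_of_mem ilast (Finset.mem_univ _) (fun j _ hj => by
        rw [hmono_repr, if_neg hj, mul_zero, zero_mul]), hmono_repr, if_pos rfl]
    have hine : i ≠ ilast := by
      intro h0
      have := congrArg Fin.val h0
      rw [hlastv] at this
      omega
    have hcollapse : Algebra.trace K L (x * (algebraMap K L c * y' ^ (ilast:ℕ)))
        = -((B.repr x i + B.repr x ilast) * c) := by
      rw [htrval]
      have hper : ∀ i2 : Fin p, (B.repr x i2 * c) * T ((i2:ℕ) + (ilast:ℕ))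
          = (if i2 = i then -(B.repr x i * c) else 0)
            + (if i2 = ilast then -(B.repr x ilast * c) else 0) := by
        intro i2
        rw [hTsum i2 ilast]
        by_cases hc1 : i2 = i
        · have hne2 : ¬ (i2 = ilast) := by rw [hc1]; exact hine
          rw [if_pos (Or.inl (by rw [hc1, hlastv]; omega)), if_pos hc1, if_neg hne2,
            hc1, mul_neg_one, add_zero]
        · by_cases hc2 : i2 = ilast
          · rw [if_pos (Or.inr ⟨by rw [hc2, hlastv], by rw [hlastv]⟩), if_neg hc1,
              if_pos hc2, hc2, mul_neg_one, zero_add]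
          · rw [if_neg ?_, if_neg hc1, if_neg hc2, mul_zero, add_zero]
            rintro (hor | ⟨h1, h2⟩)
            · rw [hlastv] at hor
              exact hc1 (Fin.ext (by omega))
            · exact hc2 (Fin.ext (by rw [h1, hlastv]))
      rw [Finset.sum_congr rfl fun i2 _ => hper i2, Finset.sum_add_distrib,
        Finset.sum_ite_eq' Finset.univ i _, Finset.sum_ite_eq' Finset.univ ilast _,
        if_pos (Finset.mem_univ _), if_pos (Finset.mem_univ _)]
      ring
    have htr' : -((B.repr x i + B.repr x ilast) * c) = 0 ∨
        0 ≤ VK.v (-((B.repr x i + B.repr x ilast) * c)) := by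
      rw [← hcollapse]; exact htr
    have hiZ : ((i:ℕ):ℤ) = 0 := by omega
    have hlast_prod : ((ilast:ℕ):ℤ) * ma = ((p:ℤ) - 1) * ma := by rw [hlastZ]
    by_cases hbl : B.repr x ilast = 0
    · -- expression is -(b i * c)
      have hexp : -((B.repr x i + B.repr x ilast) * c) = -(B.repr x i * c) := by
        rw [hbl]; ring
      rw [hexp] at htr'
      have hmul : B.repr x i * c ≠ 0 := mul_ne_zero hb0 hc0
      rcases htr' with h0 | hge
      · exact absurd (neg_eq_zero.mp h0) hmul
      rw [VK.v_neg hmul, VK.v_mul hb0 hc0] at hge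
      have hmulp := mul_le_mul_of_nonneg_left hge (show (0:ℤ) ≤ (p:ℤ) by positivity)
      nlinarith [hcB, hlast_prod, hmulp, hiZ]
    · by_cases hw0 : B.repr x i + B.repr x ilast = 0
      · have heq : B.repr x i = -B.repr x ilast := eq_neg_of_add_eq_zero_left hw0
        rw [heq, VK.v_neg hbl]
        have hv0 : 0 ≤ VK.v (B.repr x ilast) := hblast0.resolve_left hbl
        have hmulp := mul_le_mul_of_nonneg_left hv0 (show (0:ℤ) ≤ (p:ℤ) by positivity)
        nlinarith [hmann, hmulp, hiZ]
      · have hmul : (B.repr x i + B.repr x ilast) * c ≠ 0 := mul_ne_zero hw0 hc0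
        rcases htr' with h0 | hge
        · exact absurd (neg_eq_zero.mp h0) hmul
        rw [VK.v_neg hmul, VK.v_mul hw0 hc0] at hge
        have hvw : 0 ≤ VK.v (B.repr x i + B.repr x ilast) + VK.v c := hge
        have hbi_eq : B.repr x i = (B.repr x i + B.repr x ilast) + (-B.repr x ilast) := by ring
        have hsum_ne : (B.repr x i + B.repr x ilast) + (-B.repr x ilast) ≠ 0 := by
          rw [← hbi_eq]; exact hb0
        have hmin := VK.v_add hw0 (neg_ne_zero.mpr hbl) hsum_ne
        rw [← hbi_eq, VK.v_neg hbl] at hmin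
        have hv0 : 0 ≤ VK.v (B.repr x ilast) := hblast0.resolve_left hbl
        rcases le_total (VK.v (B.repr x i + B.repr x ilast)) (VK.v (B.repr x ilast)) with hmm | hmm
        · have h1 : VK.v (B.repr x i + B.repr x ilast) ≤ VK.v (B.repr x i) := by omega
          have hmulp := mul_le_mul_of_nonneg_left h1 (show (0:ℤ) ≤ (p:ℤ) by positivity)
          have hmulw := mul_le_mul_of_nonneg_left hvw (show (0:ℤ) ≤ (p:ℤ) by positivity)
          nlinarith [hcB, hlast_prod, hiZ, hmulp, hmulw]
        · have h1 : VK.v (B.repr x ilast) ≤ VK.v (B.repr x i) := by omega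
          have hmulp := mul_le_mul_of_nonneg_left (le_trans hv0 h1)
            (show (0:ℤ) ≤ (p:ℤ) by positivity)
          nlinarith [hmann, hmulp, hiZ]
  · -- backward
    intro hbnd z hz
    have hc := (hcoord z 0).mp hz
    rw [htf x z]
    refine VK.sum_ge Finset.univ _ 0 (fun i _ => VK.sum_ge Finset.univ _ 0 (fun j _ => ?_))
    rw [hTsum i j]
    by_cases hcond : ((i:ℕ) + (j:ℕ) = p - 1 ∨ ((i:ℕ) = p - 1 ∧ (j:ℕ) = p - 1))
    swap
    · rw [if_neg hcond, mul_zero]; exact Or.inl rfl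
    rw [if_pos hcond, mul_neg_one]
    by_cases hbi : B.repr x i = 0
    · left; rw [hbi, zero_mul, neg_zero]
    by_cases hcj : B.repr z j = 0
    · left; rw [hcj, mul_zero, neg_zero]
    right
    have hmul : B.repr x i * B.repr z j ≠ 0 := mul_ne_zero hbi hcj
    rw [VK.v_neg hmul, VK.v_mul hbi hcj]
    have hb1 : -((ma + 1) * ((p:ℤ) - 1)) ≤ (p:ℤ) * VK.v (B.repr x i) - (i:ℕ) * ma :=
      (hbnd i).resolve_left hbi
    have hc1 : (0:ℤ) ≤ (p:ℤ) * VK.v (B.repr z j) - (j:ℕ) * ma :=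
      (hc j).resolve_left hcj
    refine hposdiv _ ?_
    rw [mul_add]
    rcases hcond with hsum | ⟨hieq, hjeq⟩
    · have hijZ : ((i:ℕ):ℤ) + ((j:ℕ):ℤ) = (p:ℤ) - 1 := by
        have := i.2; omega
      have hprod : (((i:ℕ):ℤ) + ((j:ℕ):ℤ)) * ma = ((p:ℤ) - 1) * ma := by rw [hijZ]
      nlinarith [hb1, hc1, hprod]
    · have hiZ : ((i:ℕ):ℤ) = (p:ℤ) - 1 := by omega
      have hjZ : ((j:ℕ):ℤ) = (p:ℤ) - 1 := by omega
      have hprodi : ((i:ℕ):ℤ) * ma = ((p:ℤ) - 1) * ma := by rw [hiZ]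
      have hprodj : ((j:ℕ):ℤ) * ma = ((p:ℤ) - 1) * ma := by rw [hjZ]
      have hnn : (0:ℤ) ≤ ((p:ℤ) - 1) * (ma - 1) := mul_nonneg (by omega) (by omega)
      nlinarith [hb1, hc1, hprodi, hprodj, hnn]
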